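/- Let n ≥ 1, I = [0,1], 0 ≤ k ≤ n−1, and let (X,x₀) be any well-pointed space. Let M = I^k × [0,2] × I^{n−k−1} and N = (∂I^k × [0,2] × I^{n−k−1}) ∪ (I^k × {0} × I^{n−k−1}). Then the relative labelled configuration space C⁰(M,N;X) is contractible. -/

import Mathlib

open scoped unitInterval Topology
open Metric Set

noncomputable section

universe uWP

/-! ### Ordered configuration spaces -/

/-- The ordered configuration space `C⁰_k(M)`: `k`-tuples of pairwise distinct points of `M`,
topologized as a subspace of `M^k`. -/
def OrdConfig (M : Type*) [TopologicalSpace M] (k : ℕ) : Type _ :=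
  {p : Fin k → M // Function.Injective p}

instance (M : Type*) [TopologicalSpace M] (k : ℕ) : TopologicalSpace (OrdConfig M k) :=
  inferInstanceAs (TopologicalSpace {p : Fin k → M // Function.Injective p})

/-- The action of the symmetric group `Σ_k` on the ordered configuration space,
permuting the coordinates. -/
def OrdConfig.perm {M : Type*} [TopologicalSpace M] {k : ℕ} (e : Equiv.Perm (Fin k))
    (p : OrdConfig M k) : OrdConfig M k :=
  ⟨p.1 ∘ e, p.2.comp e.injective⟩

/-! ### Labelled configuration spaces -/

/-- The "pre-configuration space": disjoint union over `k` of `C⁰_k(M) × X^k`. -/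
def LabelPre (M X : Type*) [TopologicalSpace M] [TopologicalSpace X] : Type _ :=
  Σ k : ℕ, OrdConfig M k × (Fin k → X)

instance (M X : Type*) [TopologicalSpace M] [TopologicalSpace X] :
    TopologicalSpace (LabelPre M X) :=
  inferInstanceAs (TopologicalSpace (Σ k : ℕ, OrdConfig M k × (Fin k → X)))

/-- The relation generating the equivalence defining `C⁰(M;X)`: permuting points together
with their labels, and deleting points labelled by the base point `x₀`. -/
inductive LabelRel (M X : Type*) [TopologicalSpace M] [TopologicalSpace X] (x₀ : X) :
    LabelPre M X → LabelPre M X → Prop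
  | perm {k : ℕ} (c : OrdConfig M k) (l : Fin k → X) (e : Equiv.Perm (Fin k)) :
      LabelRel M X x₀ ⟨k, c, l⟩ ⟨k, OrdConfig.perm e c, l ∘ e⟩
  | delete {k : ℕ} (c : OrdConfig M (k + 1)) (l : Fin (k + 1) → X) (i : Fin (k + 1))
      (h : l i = x₀) :
      LabelRel M X x₀ ⟨k + 1, c, l⟩
        ⟨k, ⟨c.1 ∘ i.succAbove, c.2.comp Fin.succAbove_right_injective⟩, l ∘ i.succAbove⟩

/-- The labelled configuration space `C⁰(M;X)`, with the quotient topology. -/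
def LabeledConfig (M X : Type*) [TopologicalSpace M] [TopologicalSpace X] (x₀ : X) :=
  Quot (LabelRel M X x₀)

instance (M X : Type*) [TopologicalSpace M] [TopologicalSpace X] (x₀ : X) :
    TopologicalSpace (LabeledConfig M X x₀) :=
  inferInstanceAs (TopologicalSpace (Quot (LabelRel M X x₀)))

/-- The empty configuration. -/
def LabelPre.empty (M X : Type*) [TopologicalSpace M] [TopologicalSpace X] : LabelPre M X :=
  ⟨0, ⟨Fin.elim0, fun i => i.elim0⟩, Fin.elim0⟩

/-- The class of the empty configuration; the base point of `C⁰(M;X)`. -/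
def LabeledConfig.empty (M X : Type*) [TopologicalSpace M] [TopologicalSpace X] (x₀ : X) :
    LabeledConfig M X x₀ :=
  Quot.mk _ (LabelPre.empty M X)

/-- The label of a pre-configuration `a` at a point `m` of `M`: the label of the point of the
configuration located at `m`, if there is one, and the base point `x₀` otherwise. -/
noncomputable def labelAt {M X : Type*} [TopologicalSpace M] [TopologicalSpace X] (x₀ : X)
    (a : LabelPre M X) (m : M) : X :=
  haveI := Classical.propDecidable (∃ i, a.2.1.1 i = m)
  if h : ∃ i, a.2.1.1 i = m then a.2.2 h.choose else x₀

/-- Two labelled configurations agree off `N` if they have representatives whose labelled points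
outside of `N` coincide. -/
def AgreeOff {M X : Type*} [TopologicalSpace M] [TopologicalSpace X] (x₀ : X) (N : Set M)
    (a b : LabeledConfig M X x₀) : Prop :=
  ∃ a' b' : LabelPre M X, a = Quot.mk _ a' ∧ b = Quot.mk _ b' ∧
    ∀ m ∉ N, labelAt x₀ a' m = labelAt x₀ b' m

/-- The relative labelled configuration space `C⁰(M,N;X)`: the quotient of `C⁰(M;X)`
identifying two labelled configurations whenever they agree on `M ∖ N`. -/
def RelConfig (M : Type*) [TopologicalSpace M] (N : Set M) (X : Type*) [TopologicalSpace X]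
    (x₀ : X) : Type _ :=
  Quot (AgreeOff (M := M) (X := X) x₀ N)

instance (M : Type*) [TopologicalSpace M] (N : Set M) (X : Type*) [TopologicalSpace X] (x₀ : X) :
    TopologicalSpace (RelConfig M N X x₀) :=
  inferInstanceAs (TopologicalSpace (Quot _))

/-- The base point of `C⁰(M,N;X)`: the class of the empty configuration. -/
def RelConfig.base (M : Type*) [TopologicalSpace M] (N : Set M) (X : Type*) [TopologicalSpace X]
    (x₀ : X) : RelConfig M N X x₀ :=
  Quot.mk _ (LabeledConfig.empty M X x₀)

/-! ### Well-pointedness -/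

/-- `(X, x₀)` is well-pointed if the inclusion `{x₀} ↪ X` is a cofibration, i.e. satisfies the
homotopy extension property. -/
def IsWellPointed (X : Type uWP) [TopologicalSpace X] (x₀ : X) : Prop :=
  ∀ (Y : Type uWP) (_ : TopologicalSpace Y) (f : C(X, Y)) (p : C(I, Y)),
    p 0 = f x₀ → ∃ G : C(I × X, Y), (∀ x, G (0, x) = f x) ∧ ∀ t, G (t, x₀) = p t

/-! ### Cubes, suspensions and loop spaces -/

/-- The `n`-cube `I^n`. -/
def NCube (n : ℕ) : Type :=
  Fin n → I

instance (n : ℕ) : TopologicalSpace (NCube n) :=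
  inferInstanceAs (TopologicalSpace (Fin n → I))

/-- The boundary `∂I^n` of the `n`-cube. -/
def NCube.boundary (n : ℕ) : Set (NCube n) :=
  {t | ∃ i, t i = 0 ∨ t i = 1}

/-- The subset of `I^n × X` collapsed in the definition of the reduced suspension:
`(∂I^n × X) ∪ (I^n × {x₀})`. -/
def SuspCollapse (n : ℕ) (X : Type*) [TopologicalSpace X] (x₀ : X) : Set (NCube n × X) :=
  (NCube.boundary n ×ˢ (univ : Set X)) ∪ ((univ : Set (NCube n)) ×ˢ ({x₀} : Set X))

/-- The `n`-fold reduced suspension `Σⁿ X = (I^n × X)/((∂I^n × X) ∪ (I^n × {x₀}))`. -/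
def Susp (n : ℕ) (X : Type*) [TopologicalSpace X] (x₀ : X) :=
  Quot (fun a b : NCube n × X => a ∈ SuspCollapse n X x₀ ∧ b ∈ SuspCollapse n X x₀)

instance (n : ℕ) (X : Type*) [TopologicalSpace X] (x₀ : X) : TopologicalSpace (Susp n X x₀) :=
  inferInstanceAs (TopologicalSpace (Quot _))

/-- The base point of the reduced suspension: the class of the collapsed subset. -/
def Susp.base (n : ℕ) (X : Type*) [TopologicalSpace X] (x₀ : X) : Susp n X x₀ :=
  Quot.mk _ (fun _ => 0, x₀)

/-- The `n`-fold based loop space `Ωⁿ(Y,y₀)`, modelled as the space of continuous maps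
`I^n → Y` sending `∂I^n` to the base point, with the compact-open topology. -/
def NLoop (n : ℕ) (Y : Type*) [TopologicalSpace Y] (y₀ : Y) :=
  {f : C(NCube n, Y) // ∀ t ∈ NCube.boundary n, f t = y₀}

instance (n : ℕ) (Y : Type*) [TopologicalSpace Y] (y₀ : Y) : TopologicalSpace (NLoop n Y y₀) :=
  inferInstanceAs (TopologicalSpace {f : C(NCube n, Y) // ∀ t ∈ NCube.boundary n, f t = y₀})

/-! ### Weak homotopy equivalences -/

/-- The map induced on path components by a continuous map. -/
def ZerothHomotopy.inducedMap {X Y : Type*} [TopologicalSpace X] [TopologicalSpace Y]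
    (f : C(X, Y)) : ZerothHomotopy X → ZerothHomotopy Y :=
  @Quotient.map _ _ (pathSetoid X) (pathSetoid Y) f
    (fun _ _ h => Nonempty.map (fun p => p.map f.continuous) h)

/-- The map induced by a continuous map on generalized loops. -/
def GenLoop.inducedMap {N X Y : Type*} [TopologicalSpace X] [TopologicalSpace Y] {x : X}
    (f : C(X, Y)) (p : GenLoop N X x) : GenLoop N Y (f x) :=
  ⟨f.comp p.1, fun y hy => by
    simp only [ContinuousMap.comp_apply]
    rw [p.2 y hy]⟩

/-- The map induced by a continuous map on homotopy groups. -/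
def HomotopyGroup.inducedMap (N : Type*) {X Y : Type*} [TopologicalSpace X] [TopologicalSpace Y]
    (x : X) (f : C(X, Y)) : HomotopyGroup N X x → HomotopyGroup N Y (f x) :=
  Quotient.map (GenLoop.inducedMap f)
    (fun _ _ h => Nonempty.map (fun H => H.compContinuousMap f) h)

/-- A continuous map is a weak homotopy equivalence if it induces a bijection on path
components and isomorphisms on all homotopy groups at every base point. -/
def IsWeakHomotopyEquiv {X Y : Type*} [TopologicalSpace X] [TopologicalSpace Y]
    (f : C(X, Y)) : Prop :=
  Function.Bijective (ZerothHomotopy.inducedMap f) ∧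
    ∀ (n : ℕ) (x : X), Function.Bijective (HomotopyGroup.inducedMap (Fin n) x f)

/-! ### Auxiliary development for the contraction -/

namespace RelConfigContract

set_option linter.unusedSectionVars false
set_option linter.unusedVariables false

variable {A B X : Type*} [TopologicalSpace A] [TopologicalSpace B]
  [T2Space A] [T2Space B] [TopologicalSpace X]

/-- The cylinder `A × [0,2] × B`. -/
abbrev Cyl (A B : Type*) : Type _ := A × ↥(Set.Icc (0 : ℝ) 2) × B

/-- The `[0,2]`-coordinate of a point of the cylinder. -/
def sv (p : Cyl A B) : ℝ := (p.2.1 : ℝ)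

lemma sv_nonneg (p : Cyl A B) : 0 ≤ sv p := p.2.1.2.1
lemma sv_le_two (p : Cyl A B) : sv p ≤ 2 := p.2.1.2.2

lemma continuous_sv : Continuous (sv (A := A) (B := B)) :=
  continuous_subtype_val.comp (continuous_fst.comp continuous_snd)

/-- Downward shift of the `[0,2]` coordinate by `2t`, truncated at `0`. -/
def shiftPt (t : I) (p : Cyl A B) : Cyl A B :=
  ⟨p.1, ⟨max (sv p - 2 * (t : ℝ)) 0,
    ⟨le_max_right _ _, max_le (by nlinarith [sv_le_two p, t.2.1]) (by norm_num)⟩⟩, p.2.2⟩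

lemma sv_shiftPt (t : I) (p : Cyl A B) :
    sv (shiftPt t p) = max (sv p - 2 * (t : ℝ)) 0 := rfl

lemma continuous_shiftPt : Continuous (fun q : I × Cyl A B => shiftPt q.1 q.2) := by
  refine Continuous.prodMk (continuous_fst.comp continuous_snd) (Continuous.prodMk ?_ ?_)
  · refine Continuous.subtype_mk ?_ _
    exact ((continuous_sv.comp continuous_snd).sub
      (continuous_const.mul (continuous_subtype_val.comp continuous_fst))).max continuous_const
  · exact continuous_snd.comp (continuous_snd.comp continuous_snd)

lemma shiftPt_inj {t : I} {p q : Cyl A B} (hp : 2 * (t : ℝ) ≤ sv p) (hq : 2 * (t : ℝ) ≤ sv q)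
    (h : shiftPt t p = shiftPt t q) : p = q := by
  have h1 := congrArg Prod.fst h
  have h3 := congrArg (fun r : Cyl A B => r.2.2) h
  have h2 := congrArg sv h
  rw [sv_shiftPt, sv_shiftPt, max_eq_left (by linarith), max_eq_left (by linarith)] at h2
  exact Prod.ext h1 (Prod.ext (Subtype.ext (by unfold sv at h2; linarith)) h3)

variable {m : ℕ}

/-- The set of indices of points strictly above the threshold `2t`. -/
def Kset (c : Fin m → Cyl A B) (t : I) : Finset (Fin m) :=
  Finset.univ.filter fun i => 2 * (t : ℝ) < sv (c i)

lemma mem_Kset {c : Fin m → Cyl A B} {t : I} {i : Fin m} :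
    i ∈ Kset c t ↔ 2 * (t : ℝ) < sv (c i) := by simp [Kset]

/-- The tuple of shifted positions indexed by a finite index set `K`. -/
def Dpos (K : Finset (Fin m)) (c : Fin m → Cyl A B) (t : I) : Fin K.card → Cyl A B :=
  fun j => shiftPt t (c ((K.orderIsoOfFin rfl j : K) : Fin m))

lemma Dpos_inj {K : Finset (Fin m)} {c : Fin m → Cyl A B} {t : I}
    (hK : ∀ i ∈ K, 2 * (t : ℝ) ≤ sv (c i)) (hc : Function.Injective c) :
    Function.Injective (Dpos K c t) := by
  intro j j' h
  have h2 := shiftPt_inj (hK _ (K.orderIsoOfFin rfl j).2) (hK _ (K.orderIsoOfFin rfl j').2) h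
  exact (K.orderIsoOfFin rfl).injective (Subtype.ext (hc h2))

/-- The time-`t` map on labelled pre-configurations: delete all points with `[0,2]`-coordinate
`≤ 2t` and shift the remaining ones down by `2t`. -/
def Dmap (t : I) (a : LabelPre (Cyl A B) X) : LabelPre (Cyl A B) X :=
  ⟨(Kset a.2.1.1 t).card,
    ⟨Dpos (Kset a.2.1.1 t) a.2.1.1 t,
      Dpos_inj (fun i hi => (mem_Kset.1 hi).le) a.2.1.2⟩,
    fun j => a.2.2 (((Kset a.2.1.1 t).orderIsoOfFin rfl j : Kset a.2.1.1 t) : Fin a.1)⟩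

lemma Dmap_eq (a : LabelPre (Cyl A B) X) (t : I) (K : Finset (Fin a.1))
    (hKz : Kset a.2.1.1 t = K) (hinj : Function.Injective (Dpos K a.2.1.1 t)) :
    Dmap t a = ⟨K.card, ⟨Dpos K a.2.1.1 t, hinj⟩,
      fun j => a.2.2 ((K.orderIsoOfFin rfl j : K) : Fin a.1)⟩ := by
  subst hKz; rfl


/-! #### `labelAt` computations -/

lemma labelAt_pos {M : Type*} [TopologicalSpace M] (x₀ : X) (a : LabelPre M X) {p : M}
    (i : Fin a.1) (h : a.2.1.1 i = p) : labelAt x₀ a p = a.2.2 i := by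
  unfold labelAt
  have hex : ∃ j, a.2.1.1 j = p := ⟨i, h⟩
  rw [dif_pos hex]
  exact congrArg a.2.2 (a.2.1.2 (hex.choose_spec.trans h.symm))

lemma labelAt_none {M : Type*} [TopologicalSpace M] (x₀ : X) (a : LabelPre M X) {p : M}
    (h : ∀ i, a.2.1.1 i ≠ p) : labelAt x₀ a p = x₀ := by
  unfold labelAt
  rw [dif_neg]
  rintro ⟨i, hi⟩
  exact h i hi

lemma labelAt_labelRel {M : Type*} [TopologicalSpace M] {x₀ : X} {a b : LabelPre M X}
    (h : LabelRel M X x₀ a b) (p : M) : labelAt x₀ a p = labelAt x₀ b p := by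
  induction h with
  | perm c l e =>
    by_cases hex : ∃ i, c.1 i = p
    · obtain ⟨i, hi⟩ := hex
      have h2 : (OrdConfig.perm e c).1 (e.symm i) = p := by
        show c.1 (e (e.symm i)) = p
        rw [Equiv.apply_symm_apply]; exact hi
      rw [labelAt_pos x₀ ⟨_, c, l⟩ i hi,
          labelAt_pos x₀ ⟨_, OrdConfig.perm e c, l ∘ e⟩ (e.symm i) h2]
      show l i = l (e (e.symm i))
      rw [Equiv.apply_symm_apply]
    · rw [labelAt_none x₀ ⟨_, c, l⟩ (fun i hi => hex ⟨i, hi⟩),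
          labelAt_none x₀ ⟨_, OrdConfig.perm e c, l ∘ e⟩ (fun i hi => hex ⟨e i, hi⟩)]
  | delete c l i hl =>
    by_cases hip : c.1 i = p
    · rw [labelAt_pos x₀ ⟨_, c, l⟩ i hip]
      exact hl.trans (labelAt_none x₀ ⟨_, ⟨c.1 ∘ i.succAbove, c.2.comp Fin.succAbove_right_injective⟩,
        l ∘ i.succAbove⟩ (fun j hj => Fin.succAbove_ne i j (c.2 (hj.trans hip.symm)))).symm
    · by_cases hex : ∃ j, c.1 (i.succAbove j) = p
      · obtain ⟨j, hj⟩ := hex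
        rw [labelAt_pos x₀ ⟨_, c, l⟩ (i.succAbove j) hj,
            labelAt_pos x₀ ⟨_, ⟨c.1 ∘ i.succAbove, c.2.comp Fin.succAbove_right_injective⟩,
              l ∘ i.succAbove⟩ j hj]
        rfl
      · refine Eq.trans (labelAt_none x₀ ⟨_, c, l⟩ fun u hu => ?_)
          (labelAt_none x₀ _ (fun j hj => hex ⟨j, hj⟩)).symm
        by_cases hui : u = i
        · exact hip (hui ▸ hu)
        · obtain ⟨j, hj⟩ := Fin.exists_succAbove_eq hui
          exact hex ⟨j, by rw [hj]; exact hu⟩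

/-! #### The quotient map and the homotopy on pre-configurations -/

variable (x₀ : X) (N : Set (Cyl A B))

/-- The full quotient map `LabelPre → RelConfig`. -/
def Q (a : LabelPre (Cyl A B) X) : RelConfig (Cyl A B) N X x₀ :=
  Quot.mk _ (Quot.mk _ a)

lemma continuous_Q : Continuous (Q (A := A) (B := B) (X := X) x₀ N) :=
  continuous_quot_mk.comp continuous_quot_mk

lemma Q_eq_of_agree {a b : LabelPre (Cyl A B) X}
    (h : ∀ p ∉ N, labelAt x₀ a p = labelAt x₀ b p) : Q x₀ N a = Q x₀ N b :=
  Quot.sound ⟨a, b, rfl, rfl, h⟩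

/-- Upward shift of a point by `2t`. -/
def liftPt (p : Cyl A B) (t : I) (h2 : sv p + 2 * (t : ℝ) ≤ 2) : Cyl A B :=
  ⟨p.1, ⟨sv p + 2 * (t : ℝ), ⟨by nlinarith [sv_nonneg p, t.2.1], h2⟩⟩, p.2.2⟩

lemma shiftPt_liftPt (p : Cyl A B) (t : I) (h2 : sv p + 2 * (t : ℝ) ≤ 2) :
    shiftPt t (liftPt p t h2) = p := by
  refine Prod.ext rfl (Prod.ext (Subtype.ext ?_) rfl)
  show max (sv p + 2 * (t : ℝ) - 2 * (t : ℝ)) 0 = sv p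
  rw [add_sub_cancel_right]
  exact max_eq_left (sv_nonneg p)

lemma labelAt_Dmap_eq (a : LabelPre (Cyl A B) X) (t : I) (p : Cyl A B)
    (hσ : sv p ≠ 0) (h2 : sv p + 2 * (t : ℝ) ≤ 2) :
    labelAt x₀ (Dmap t a) p = labelAt x₀ a (liftPt p t h2) := by
  have hσp : 0 < sv p := lt_of_le_of_ne (sv_nonneg p) (Ne.symm hσ)
  by_cases hex : ∃ i, a.2.1.1 i = liftPt p t h2
  · obtain ⟨i, hi⟩ := hex
    have hsv : sv (a.2.1.1 i) = sv p + 2 * (t : ℝ) := congrArg sv hi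
    have hiK : i ∈ Kset a.2.1.1 t := mem_Kset.2 (by rw [hsv]; linarith)
    have hpos : (Dmap t a).2.1.1 (((Kset a.2.1.1 t).orderIsoOfFin rfl).symm ⟨i, hiK⟩) = p := by
      show shiftPt t (a.2.1.1 (((Kset a.2.1.1 t).orderIsoOfFin rfl
        (((Kset a.2.1.1 t).orderIsoOfFin rfl).symm ⟨i, hiK⟩) : Kset a.2.1.1 t) : Fin a.1)) = p
      rw [OrderIso.apply_symm_apply]
      show shiftPt t (a.2.1.1 i) = p
      rw [hi, shiftPt_liftPt]
    rw [labelAt_pos x₀ (Dmap t a) _ hpos, labelAt_pos x₀ a i hi]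
    show a.2.2 (((Kset a.2.1.1 t).orderIsoOfFin rfl
      (((Kset a.2.1.1 t).orderIsoOfFin rfl).symm ⟨i, hiK⟩) : Kset a.2.1.1 t) : Fin a.1) = a.2.2 i
    rw [OrderIso.apply_symm_apply]
  · rw [labelAt_none x₀ a (fun i hi => hex ⟨i, hi⟩)]
    refine labelAt_none x₀ (Dmap t a) fun j hj => ?_
    have hjK := ((Kset a.2.1.1 t).orderIsoOfFin rfl j).2
    rw [mem_Kset] at hjK
    have h1 := congrArg Prod.fst hj
    have h3 := congrArg (fun r : Cyl A B => r.2.2) hj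
    have hsv : sv (shiftPt t (a.2.1.1 (((Kset a.2.1.1 t).orderIsoOfFin rfl j :
        Kset a.2.1.1 t) : Fin a.1))) = sv p := congrArg sv hj
    rw [sv_shiftPt, max_eq_left (by linarith)] at hsv
    refine hex ⟨_, Prod.ext h1 (Prod.ext (Subtype.ext ?_) h3)⟩
    show sv (a.2.1.1 _) = sv p + 2 * (t : ℝ)
    linarith

lemma labelAt_Dmap_gt (a : LabelPre (Cyl A B) X) (t : I) (p : Cyl A B)
    (h2 : 2 < sv p + 2 * (t : ℝ)) : labelAt x₀ (Dmap t a) p = x₀ := by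
  refine labelAt_none x₀ (Dmap t a) fun j hj => ?_
  have hjK := ((Kset a.2.1.1 t).orderIsoOfFin rfl j).2
  rw [mem_Kset] at hjK
  have hsv : sv (shiftPt t (a.2.1.1 (((Kset a.2.1.1 t).orderIsoOfFin rfl j :
      Kset a.2.1.1 t) : Fin a.1))) = sv p := congrArg sv hj
  rw [sv_shiftPt, max_eq_left (by linarith)] at hsv
  have := sv_le_two (a.2.1.1 (((Kset a.2.1.1 t).orderIsoOfFin rfl j : Kset a.2.1.1 t) : Fin a.1))
  linarith

variable (hN0 : ∀ p : Cyl A B, sv p = 0 → p ∈ N)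
variable (hNs : ∀ (p : Cyl A B) (s' : ↥(Set.Icc (0 : ℝ) 2)), sv p ≠ 0 → (s' : ℝ) ≠ 0 →
  ((p.1, s', p.2.2) ∈ N ↔ p ∈ N))

include hN0 hNs in
lemma Dmap_agree {a b : LabelPre (Cyl A B) X} (t : I)
    (h : ∀ p ∉ N, labelAt x₀ a p = labelAt x₀ b p) :
    ∀ p ∉ N, labelAt x₀ (Dmap t a) p = labelAt x₀ (Dmap t b) p := by
  intro p hp
  have hσ : sv p ≠ 0 := fun h0 => hp (hN0 p h0)
  rcases le_or_gt (sv p + 2 * (t : ℝ)) 2 with h2 | h2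
  · rw [labelAt_Dmap_eq x₀ a t p hσ h2, labelAt_Dmap_eq x₀ b t p hσ h2]
    refine h _ fun hmem => hp ?_
    have hne : ((liftPt p t h2).2.1 : ℝ) ≠ 0 := by
      show sv p + 2 * (t : ℝ) ≠ 0
      nlinarith [sv_nonneg p, t.2.1, lt_of_le_of_ne (sv_nonneg p) (Ne.symm hσ)]
    exact (hNs p (liftPt p t h2).2.1 hσ hne).1 hmem
  · rw [labelAt_Dmap_gt x₀ a t p h2, labelAt_Dmap_gt x₀ b t p h2]

/-- The contraction, descended to the relative configuration space. -/
def Hmap (t : I) : RelConfig (Cyl A B) N X x₀ → RelConfig (Cyl A B) N X x₀ :=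
  Quot.lift
    (Quot.lift (fun a => Q x₀ N (Dmap t a))
      (fun _ _ h => Q_eq_of_agree x₀ N
        (Dmap_agree x₀ N hN0 hNs t (fun p _ => labelAt_labelRel h p))))
    (by
      rintro a b ⟨a', b', rfl, rfl, hw⟩
      exact Q_eq_of_agree x₀ N (Dmap_agree x₀ N hN0 hNs t hw))

lemma Hmap_zero (q : RelConfig (Cyl A B) N X x₀) : Hmap x₀ N hN0 hNs 0 q = q := by
  induction q using Quot.ind with | mk q => ?_
  induction q using Quot.ind with | mk a => ?_
  show Q x₀ N (Dmap 0 a) = Q x₀ N a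
  refine Q_eq_of_agree x₀ N fun p hp => ?_
  have hσ : sv p ≠ 0 := fun h0 => hp (hN0 p h0)
  have h2 : sv p + 2 * ((0 : I) : ℝ) ≤ 2 := by
    have := sv_le_two p; norm_num at this ⊢; exact this
  rw [labelAt_Dmap_eq x₀ a 0 p hσ h2]
  congr 1
  refine Prod.ext rfl (Prod.ext (Subtype.ext ?_) rfl)
  show sv p + 2 * ((0 : I) : ℝ) = sv p
  norm_num

lemma Hmap_one (q : RelConfig (Cyl A B) N X x₀) :
    Hmap x₀ N hN0 hNs 1 q = RelConfig.base (Cyl A B) N X x₀ := by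
  induction q using Quot.ind with | mk q => ?_
  induction q using Quot.ind with | mk a => ?_
  show Q x₀ N (Dmap 1 a) = Q x₀ N (LabelPre.empty (Cyl A B) X)
  refine Q_eq_of_agree x₀ N fun p hp => ?_
  have hσ : sv p ≠ 0 := fun h0 => hp (hN0 p h0)
  have hσp : 0 < sv p := lt_of_le_of_ne (sv_nonneg p) (Ne.symm hσ)
  have h2 : 2 < sv p + 2 * ((1 : I) : ℝ) := by norm_num; linarith
  rw [labelAt_Dmap_gt x₀ a 1 p h2, labelAt_none x₀ (LabelPre.empty (Cyl A B) X)
    (fun i => i.elim0)]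


/-! #### Continuity of the contraction -/

include hN0 in
lemma key_continuity (m : ℕ) :
    Continuous (fun z : (OrdConfig (Cyl A B) m × (Fin m → X)) × I =>
      Q x₀ N (Dmap z.2 ⟨m, z.1⟩)) := by
  rw [continuous_iff_continuousAt]
  intro z₀
  rw [ContinuousAt, _root_.tendsto_nhds]
  intro U hU hfU
  classical
  set c₀ : Fin m → Cyl A B := z₀.1.1.1 with hc₀
  set t₀ : I := z₀.2 with ht₀
  set S : Finset (Fin m) := Kset c₀ t₀ with hS
  set T : Finset (Fin m) := Finset.univ.filter (fun i => sv (c₀ i) = 2 * (t₀ : ℝ)) with hT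
  have contc : ∀ i : Fin m, Continuous
      (fun z : (OrdConfig (Cyl A B) m × (Fin m → X)) × I => z.1.1.1 i) :=
    fun i => (continuous_apply i).comp
      (continuous_subtype_val.comp (continuous_fst.comp continuous_fst))
  have contsv : ∀ i : Fin m, Continuous
      (fun z : (OrdConfig (Cyl A B) m × (Fin m → X)) × I => sv (z.1.1.1 i)) :=
    fun i => continuous_sv.comp (contc i)
  have contt : Continuous
      (fun z : (OrdConfig (Cyl A B) m × (Fin m → X)) × I => 2 * ((z.2 : I) : ℝ)) :=
    continuous_const.mul (continuous_subtype_val.comp continuous_snd)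
  -- Step A: eventually the kept set is squeezed between `S` and `S ∪ T`.
  have hAev : ∀ᶠ z : (OrdConfig (Cyl A B) m × (Fin m → X)) × I in nhds z₀, ∀ i : Fin m,
      (i ∈ S → 2 * ((z.2 : I) : ℝ) < sv (z.1.1.1 i)) ∧
      (i ∉ S → i ∉ T → sv (z.1.1.1 i) < 2 * ((z.2 : I) : ℝ)) := by
    rw [Filter.eventually_all]
    intro i
    by_cases hiS : i ∈ S
    · have h1 : ∀ᶠ z : (OrdConfig (Cyl A B) m × (Fin m → X)) × I in nhds z₀,
          2 * ((z.2 : I) : ℝ) < sv (z.1.1.1 i) :=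
        (isOpen_lt contt (contsv i)).mem_nhds (mem_Kset.1 hiS)
      filter_upwards [h1] with z hz
      exact ⟨fun _ => hz, fun h _ => absurd hiS h⟩
    · by_cases hiT : i ∈ T
      · exact Filter.Eventually.of_forall
          (fun z => ⟨fun h => absurd h hiS, fun _ h => absurd hiT h⟩)
      · have hlt : sv (c₀ i) < 2 * (t₀ : ℝ) := by
          rcases lt_trichotomy (sv (c₀ i)) (2 * (t₀ : ℝ)) with h | h | h
          · exact h
          · exact absurd (by simp [hT, h]) hiT
          · exact absurd (mem_Kset.2 h) hiS
        have h1 : ∀ᶠ z : (OrdConfig (Cyl A B) m × (Fin m → X)) × I in nhds z₀,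
            sv (z.1.1.1 i) < 2 * ((z.2 : I) : ℝ) :=
          (isOpen_lt (contsv i) contt).mem_nhds hlt
        filter_upwards [h1] with z hz
        exact ⟨fun h => absurd h hiS, fun _ _ => hz⟩
  have hAev' : ∀ᶠ z : (OrdConfig (Cyl A B) m × (Fin m → X)) × I in nhds z₀,
      S ⊆ Kset z.1.1.1 z.2 ∧ Kset z.1.1.1 z.2 ⊆ S ∪ T := by
    filter_upwards [hAev] with z hz
    refine ⟨fun i hi => mem_Kset.2 ((hz i).1 hi), fun i hi => ?_⟩
    by_contra hcon
    have h1 : i ∉ S := fun h => hcon (Finset.mem_union_left _ h)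
    have h2 : i ∉ T := fun h => hcon (Finset.mem_union_right _ h)
    exact absurd (mem_Kset.1 hi) (not_lt.2 ((hz i).2 h1 h2).le)
  -- Step B: for each candidate kept set `K`, an eventual conditional statement.
  have hBev : ∀ K : Finset (Fin m), ∀ᶠ z : (OrdConfig (Cyl A B) m × (Fin m → X)) × I in nhds z₀,
      (S ⊆ K → K ⊆ S ∪ T → Kset z.1.1.1 z.2 = K → Q x₀ N (Dmap z.2 ⟨m, z.1⟩) ∈ U) := by
    intro K
    by_cases hK : S ⊆ K ∧ K ⊆ S ∪ T
    swap
    · exact Filter.Eventually.of_forall (fun z h1 h2 _ => absurd ⟨h1, h2⟩ hK)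
    obtain ⟨hSK, hKST⟩ := hK
    have hKle : ∀ i ∈ K, 2 * (t₀ : ℝ) ≤ sv (c₀ i) := by
      intro i hi
      rcases Finset.mem_union.1 (hKST hi) with h | h
      · exact (mem_Kset.1 h).le
      · exact le_of_eq ((Finset.mem_filter.1 h).2).symm
    have hinj₀ : Function.Injective (Dpos K c₀ t₀) := Dpos_inj hKle z₀.1.1.2
    set lab : (OrdConfig (Cyl A B) m × (Fin m → X)) × I → Fin K.card → X :=
      fun z j => z.1.2 ((K.orderIsoOfFin rfl j : K) : Fin m) with hlab
    set g₀ : LabelPre (Cyl A B) X := ⟨K.card, ⟨Dpos K c₀ t₀, hinj₀⟩, lab z₀⟩ with hg₀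
    -- `Q g₀` is the value at `z₀`.
    have hQg₀ : Q x₀ N g₀ = Q x₀ N (Dmap t₀ ⟨m, z₀.1⟩) := by
      refine Q_eq_of_agree x₀ N fun p hp => ?_
      have hσ : sv p ≠ 0 := fun h0 => hp (hN0 p h0)
      by_cases hex : ∃ i, i ∈ S ∧ shiftPt t₀ (c₀ i) = p
      · obtain ⟨i, hiS, hip⟩ := hex
        have e1 : g₀.2.1.1 ((K.orderIsoOfFin rfl).symm ⟨i, hSK hiS⟩) = p := by
          show shiftPt t₀ (c₀ ((K.orderIsoOfFin rfl
            ((K.orderIsoOfFin rfl).symm ⟨i, hSK hiS⟩) : K) : Fin m)) = p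
          rw [OrderIso.apply_symm_apply]
          exact hip
        have e2 : (Dmap t₀ (⟨m, z₀.1⟩ : LabelPre (Cyl A B) X)).2.1.1
            ((S.orderIsoOfFin rfl).symm ⟨i, hiS⟩) = p := by
          show shiftPt t₀ (c₀ ((S.orderIsoOfFin rfl
            ((S.orderIsoOfFin rfl).symm ⟨i, hiS⟩) : S) : Fin m)) = p
          rw [OrderIso.apply_symm_apply]
          exact hip
        rw [labelAt_pos x₀ g₀ _ e1, labelAt_pos x₀ (Dmap t₀ ⟨m, z₀.1⟩) _ e2]
        show z₀.1.2 ((K.orderIsoOfFin rfl ((K.orderIsoOfFin rfl).symm ⟨i, hSK hiS⟩) : K) : Fin m)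
          = z₀.1.2 ((S.orderIsoOfFin rfl ((S.orderIsoOfFin rfl).symm ⟨i, hiS⟩) : S) : Fin m)
        rw [OrderIso.apply_symm_apply, OrderIso.apply_symm_apply]
      · have hg : labelAt x₀ g₀ p = x₀ := by
          refine labelAt_none x₀ g₀ fun j hj => ?_
          have hjK := (K.orderIsoOfFin rfl j).2
          rcases Finset.mem_union.1 (hKST hjK) with h | h
          · exact hex ⟨_, h, hj⟩
          · have hfil := (Finset.mem_filter.1 h).2
            have hsv : sv (shiftPt t₀ (c₀ ((K.orderIsoOfFin rfl j : K) : Fin m))) = sv p :=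
              congrArg sv hj
            rw [sv_shiftPt, hfil] at hsv
            simp at hsv
            exact hσ hsv.symm
        have hD : labelAt x₀ (Dmap t₀ (⟨m, z₀.1⟩ : LabelPre (Cyl A B) X)) p = x₀ := by
          refine labelAt_none x₀ _ fun j hj => ?_
          exact hex ⟨_, (S.orderIsoOfFin rfl j).2, hj⟩
        rw [hg, hD]
    -- open set around the defining data
    have hV : IsOpen (Q x₀ N ⁻¹' U) := hU.preimage (continuous_Q x₀ N)
    set η : {y : (Fin K.card → Cyl A B) × (Fin K.card → X) // Function.Injective y.1} →
        LabelPre (Cyl A B) X := fun y => ⟨K.card, ⟨y.1.1, y.2⟩, y.1.2⟩ with hη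
    have contη : Continuous η := by
      refine continuous_sigmaMk.comp (Continuous.prodMk ?_ ?_)
      · exact Continuous.subtype_mk (continuous_fst.comp continuous_subtype_val) _
      · exact continuous_snd.comp continuous_subtype_val
    have hηV : IsOpen (η ⁻¹' (Q x₀ N ⁻¹' U)) := hV.preimage contη
    rw [isOpen_induced_iff] at hηV
    obtain ⟨W₀, hW₀open, hW₀eq⟩ := hηV
    have hcenterV : (⟨(Dpos K c₀ t₀, lab z₀), hinj₀⟩ :
        {y : (Fin K.card → Cyl A B) × (Fin K.card → X) // Function.Injective y.1}) ∈
        η ⁻¹' (Q x₀ N ⁻¹' U) := by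
      show Q x₀ N (η ⟨(Dpos K c₀ t₀, lab z₀), hinj₀⟩) ∈ U
      have he : η ⟨(Dpos K c₀ t₀, lab z₀), hinj₀⟩ = g₀ := rfl
      rw [he, hQg₀]
      exact hfU
    rw [← hW₀eq] at hcenterV
    have hcenterW₀ : (Dpos K c₀ t₀, lab z₀) ∈ W₀ := hcenterV
    have contdata : Continuous (fun z : (OrdConfig (Cyl A B) m × (Fin m → X)) × I =>
        (Dpos K z.1.1.1 z.2, lab z)) := by
      refine Continuous.prodMk (continuous_pi fun j => ?_) (continuous_pi fun j => ?_)
      · exact continuous_shiftPt.comp (Continuous.prodMk continuous_snd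
          (contc ((K.orderIsoOfFin rfl j : K) : Fin m)))
      · exact (continuous_apply ((K.orderIsoOfFin rfl j : K) : Fin m)).comp
          (continuous_snd.comp continuous_fst)
    have hWev : ∀ᶠ z : (OrdConfig (Cyl A B) m × (Fin m → X)) × I in nhds z₀,
        (Dpos K z.1.1.1 z.2, lab z) ∈ W₀ :=
      contdata.continuousAt.preimage_mem_nhds (hW₀open.mem_nhds hcenterW₀)
    filter_upwards [hWev] with z hz
    intro _ _ hKz
    have hinjz : Function.Injective (Dpos K z.1.1.1 z.2) :=
      Dpos_inj (fun i hi => (mem_Kset.1 (by rw [hKz]; exact hi)).le) z.1.1.2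
    have hmem : (⟨(Dpos K z.1.1.1 z.2, lab z), hinjz⟩ :
        {y : (Fin K.card → Cyl A B) × (Fin K.card → X) // Function.Injective y.1}) ∈
        Subtype.val ⁻¹' W₀ := hz
    rw [hW₀eq] at hmem
    rw [Dmap_eq (⟨m, z.1⟩ : LabelPre (Cyl A B) X) z.2 K hKz hinjz]
    exact hmem
  have hall : ∀ᶠ z : (OrdConfig (Cyl A B) m × (Fin m → X)) × I in nhds z₀,
      ∀ K : Finset (Fin m),
        (S ⊆ K → K ⊆ S ∪ T → Kset z.1.1.1 z.2 = K → Q x₀ N (Dmap z.2 ⟨m, z.1⟩) ∈ U) :=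
    Filter.eventually_all.2 hBev
  filter_upwards [hAev', hall] with z hz hz2
  exact hz2 (Kset z.1.1.1 z.2) hz.1 hz.2 rfl

include hN0 in
lemma continuous_QDmap :
    Continuous (fun z : LabelPre (Cyl A B) X × I => Q x₀ N (Dmap z.2 z.1)) := by
  rw [continuous_iff_continuousAt]
  rintro ⟨⟨m, a⟩, t₀⟩
  have hkey := (key_continuity x₀ N hN0 m).continuousAt (x := (a, t₀))
  rw [ContinuousAt] at hkey ⊢
  have hnh : nhds (((⟨m, a⟩ : LabelPre (Cyl A B) X), t₀) : LabelPre (Cyl A B) X × I) =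
      Filter.map (fun w : (OrdConfig (Cyl A B) m × (Fin m → X)) × I =>
        ((⟨m, w.1⟩ : LabelPre (Cyl A B) X), w.2)) (nhds (a, t₀)) := by
    have h1 := Filter.prod_map_map_eq (f₁ := nhds a) (f₂ := nhds t₀)
      (m₁ := @Sigma.mk ℕ (fun k => OrdConfig (Cyl A B) k × (Fin k → X)) m) (m₂ := id)
    rw [Filter.map_id] at h1
    show 𝓝 (((⟨m, a⟩ : Σ k : ℕ, OrdConfig (Cyl A B) k × (Fin k → X))), t₀) =
      Filter.map (fun w : (OrdConfig (Cyl A B) m × (Fin m → X)) × I =>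
        ((⟨m, w.1⟩ : Σ k : ℕ, OrdConfig (Cyl A B) k × (Fin k → X)), w.2)) (nhds (a, t₀))
    rw [nhds_prod_eq, nhds_prod_eq, Sigma.nhds_mk, h1]
    rfl
  rw [hnh]
  exact Filter.tendsto_map'_iff.2 hkey

include hN0 hNs in
/-- The contractibility of the relative configuration space of the cylinder. -/
theorem contractible_relConfig :
    ContractibleSpace (RelConfig (Cyl A B) N X x₀) := by
  rw [contractible_iff_id_nullhomotopic]
  refine ⟨RelConfig.base (Cyl A B) N X x₀, ⟨?_⟩⟩
  refine
    { toFun := fun q => Hmap x₀ N hN0 hNs q.1 q.2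
      continuous_toFun := ?_
      map_zero_left := fun q => Hmap_zero x₀ N hN0 hNs q
      map_one_left := fun q => Hmap_one x₀ N hN0 hNs q }
  have hq : Topology.IsQuotientMap
      (fun a : LabelPre (Cyl A B) X => Q x₀ N a) :=
    isQuotientMap_quot_mk.comp isQuotientMap_quot_mk
  refine hq.continuous_lift_prod_right ?_
  exact (continuous_QDmap x₀ N hN0).comp continuous_swap

end RelConfigContract

/-- For `n ≥ 1`, `0 ≤ k ≤ n-1` and a well-pointed space `(X,x₀)`, let
`M = I^k × [0,2] × I^{n-k-1}` and
`N = (∂I^k × [0,2] × I^{n-k-1}) ∪ (I^k × {0} × I^{n-k-1})`. Then the relative labelled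
configuration space `C⁰(M,N;X)` is contractible. -/
theorem relConfig_cylinder_contractible (n k : ℕ) (hn : 1 ≤ n) (hk : k ≤ n - 1)
    (X : Type*) [TopologicalSpace X] (x₀ : X) (hwp : IsWellPointed X x₀) :
    ContractibleSpace
      (RelConfig ((Fin k → I) × ↥(Set.Icc (0 : ℝ) 2) × (Fin (n - k - 1) → I))
        {p | (∃ i, p.1 i = 0 ∨ p.1 i = 1) ∨ (p.2.1 : ℝ) = 0} X x₀) := by
  refine RelConfigContract.contractible_relConfig x₀
    {p : (Fin k → I) × ↥(Set.Icc (0 : ℝ) 2) × (Fin (n - k - 1) → I) |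
      (∃ i, p.1 i = 0 ∨ p.1 i = 1) ∨ (p.2.1 : ℝ) = 0} ?_ ?_
  · intro p hp
    exact Or.inr hp
  · intro p s' hs hs'
    simp only [Set.mem_setOf_eq]
    constructor
    · rintro (h | h)
      · exact Or.inl h
      · exact absurd h hs'
    · rintro (h | h)
      · exact Or.inl h
      · exact absurd h hs

end
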